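/- Let F and V be real symmetric d×d matrices with V positive definite, F ⪰ κV for some κ > 0. Then λ_min(F V⁻¹ F) ≥ κ²·λ_min(V), where λ_min denotes the smallest eigenvalue. -/

import Mathlib

open Matrix

lemma aux_norm_one {n : Type*} [Fintype n] [DecidableEq n]
    {A : Matrix n n ℝ} (hA : A.IsHermitian) (i : n) :
    dotProduct (star ⇑(hA.eigenvectorBasis i)) ⇑(hA.eigenvectorBasis i) = 1 := by
  have h := hA.eigenvectorBasis.orthonormal.1 i
  have := EuclideanSpace.inner_eq_star_dotProduct (hA.eigenvectorBasis i) (hA.eigenvectorBasis i)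
  rw [inner_self_eq_norm_sq_to_K, h] at this
  simpa using this.symm

/-- Over ℝ, a Hermitian matrix minus (inf of eigenvalues) • 1 is PSD. -/
lemma aux_sub_inf_psd {n : Type*} [Fintype n] [DecidableEq n] [Nonempty n]
    {A : Matrix n n ℝ} (hA : A.IsHermitian) :
    (A - (⨅ i, hA.eigenvalues i) • (1 : Matrix n n ℝ)).PosSemidef := by
  set c := ⨅ i, hA.eigenvalues i with hc
  set U : Matrix n n ℝ := (hA.eigenvectorUnitary : Matrix n n ℝ) with hUdef
  have hU : U * star U = 1 := (Matrix.mem_unitaryGroup_iff).mp hA.eigenvectorUnitary.2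
  have h1 : A - c • 1 = U * (diagonal (fun i => hA.eigenvalues i - c)) * star U := by
    have hd : diagonal (fun i => hA.eigenvalues i - c)
        = diagonal (RCLike.ofReal ∘ hA.eigenvalues) - c • (1 : Matrix n n ℝ) := by
      ext i j
      by_cases h : i = j
      · subst h; simp [Matrix.diagonal_apply_eq]
      · simp [Matrix.diagonal_apply_ne _ h, Matrix.one_apply_ne h]
    rw [hd, Matrix.mul_sub, Matrix.sub_mul]
    conv_lhs => rw [hA.spectral_theorem, Unitary.conjStarAlgAut_apply]
    congr 1
    rw [Matrix.mul_smul, Matrix.smul_mul, Matrix.mul_one, hU]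
  rw [h1]
  have hdiagPSD : (diagonal (fun i => hA.eigenvalues i - c)).PosSemidef := by
    refine Matrix.posSemidef_diagonal_iff.mpr fun i => ?_
    have : c ≤ hA.eigenvalues i := ciInf_le (Finite.bddBelow_range _) i
    linarith
  simpa [Matrix.star_eq_conjTranspose] using hdiagPSD.mul_mul_conjTranspose_same U

lemma aux_eig_ge {n : Type*} [Fintype n] [DecidableEq n]
    {A : Matrix n n ℝ} (hA : A.IsHermitian) {c : ℝ}
    (h : (A - c • (1 : Matrix n n ℝ)).PosSemidef) (i : n) :
    c ≤ hA.eigenvalues i := by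
  have hq := h.dotProduct_mulVec_nonneg ⇑(hA.eigenvectorBasis i)
  rw [Matrix.sub_mulVec, Matrix.smul_mulVec, Matrix.one_mulVec, dotProduct_sub,
    hA.mulVec_eigenvectorBasis, dotProduct_smul, dotProduct_smul,
    aux_norm_one hA i] at hq
  simp only [smul_eq_mul, mul_one] at hq
  linarith

theorem stmt_1 (d : ℕ) (hd : 0 < d) (F V : Matrix (Fin d) (Fin d) ℝ)
    (hF : F.IsHermitian) (hV : V.PosDef) (κ : ℝ) (hκ : 0 < κ)
    (hFV : (F - κ • V).PosSemidef)
    (hM : (F * V⁻¹ * F).IsHermitian) :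
    κ ^ 2 * ⨅ i, hV.isHermitian.eigenvalues i ≤ ⨅ i, hM.eigenvalues i := by
  have : Nonempty (Fin d) := ⟨⟨0, hd⟩⟩
  set A := F - κ • V with hA
  have hdet : IsUnit V.det := isUnit_iff_ne_zero.mpr hV.det_pos.ne'
  have hVinv : V * V⁻¹ = 1 := Matrix.mul_nonsing_inv V hdet
  have hVinv' : V⁻¹ * V = 1 := Matrix.nonsing_inv_mul V hdet
  -- key algebraic identity
  have hFVV : F * V⁻¹ * V = F := by rw [Matrix.mul_assoc, hVinv', Matrix.mul_one]
  have h1 : A * V⁻¹ = F * V⁻¹ - κ • (1 : Matrix (Fin d) (Fin d) ℝ) := by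
    rw [hA, Matrix.sub_mul, Matrix.smul_mul, hVinv]
  have h2 : A * V⁻¹ * A = F * V⁻¹ * F - κ • F - κ • F + (κ ^ 2) • V := by
    rw [h1, hA, Matrix.sub_mul, Matrix.mul_sub, Matrix.mul_sub]
    simp only [Matrix.smul_mul, Matrix.mul_smul, Matrix.one_mul, hFVV, smul_smul, ← pow_two]
    abel
  have hkey : F * V⁻¹ * F - (κ ^ 2) • V = A * V⁻¹ * A + (2 * κ) • A := by
    rw [h2, hA, smul_sub, smul_smul]
    ext i j
    simp [Matrix.sub_apply, Matrix.add_apply, Matrix.smul_apply]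
    ring
  -- PSD of M - κ² V
  have hAH : A.IsHermitian := hFV.1
  have hAVA : (A * V⁻¹ * A).PosSemidef := by
    have := (hV.inv.posSemidef).mul_mul_conjTranspose_same A
    rwa [hAH.eq] at this
  have h2A : ((2 * κ) • A).PosSemidef := by
    refine Matrix.PosSemidef.of_dotProduct_mulVec_nonneg (by simp [Matrix.IsHermitian, Matrix.conjTranspose_smul, ← Matrix.conjTranspose_eq_transpose_of_trivial, hAH.eq]) fun x => ?_
    rw [Matrix.smul_mulVec, dotProduct_smul, smul_eq_mul]
    exact mul_nonneg (by linarith) (hFV.dotProduct_mulVec_nonneg x)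
  have hMV : (F * V⁻¹ * F - (κ ^ 2) • V).PosSemidef := by
    rw [hkey]; exact hAVA.add h2A
  -- V - c • 1 PSD with c = inf eig V
  set c := ⨅ i, hV.isHermitian.eigenvalues i with hc
  have hVc : (V - c • (1 : Matrix (Fin d) (Fin d) ℝ)).PosSemidef := aux_sub_inf_psd hV.isHermitian
  have hVc2 : ((κ ^ 2) • (V - c • (1 : Matrix (Fin d) (Fin d) ℝ))).PosSemidef := by
    refine Matrix.PosSemidef.of_dotProduct_mulVec_nonneg (by simp [Matrix.IsHermitian, Matrix.conjTranspose_smul, ← Matrix.conjTranspose_eq_transpose_of_trivial, hVc.1.eq]) fun x => ?_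
    rw [Matrix.smul_mulVec, dotProduct_smul, smul_eq_mul]
    exact mul_nonneg (sq_nonneg κ) (hVc.dotProduct_mulVec_nonneg x)
  have hfinal : (F * V⁻¹ * F - (κ ^ 2 * c) • (1 : Matrix (Fin d) (Fin d) ℝ)).PosSemidef := by
    have := hMV.add hVc2
    have heq : F * V⁻¹ * F - (κ ^ 2) • V + (κ ^ 2) • (V - c • (1 : Matrix (Fin d) (Fin d) ℝ))
        = F * V⁻¹ * F - (κ ^ 2 * c) • (1 : Matrix (Fin d) (Fin d) ℝ) := by
      rw [smul_sub, smul_smul]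
      abel
    rwa [heq] at this
  refine le_ciInf fun i => aux_eig_ge hM hfinal i
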